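/- arXiv:1805.07179 — 2 statements merged into one kernel-verified Lean document; each statement's English description precedes it below -/
import Mathlib

section
/- If a Markov chain (X_k) on ℝ^d with transition kernel K_X has stationary density ρ_X, and the augmented chain Z_k = (X_k, Y_k) arises from a Markov chain acceptance-rejection algorithm with proposal densities q(·|x), then the measure on ℝ^{2d} with density ρ_Z(x,y) = ρ_X(x) q(y|x) is stationary for the augmented chain. -/
open MeasureTheory ENNReal

/- Writing `(Q g)(x) = ∫ g(x, y') q(y'|x) dy'`, the augmented kernel acts on `g` as
`(x, y) ↦ (1 - α(x,y)) (Q g)(x) + α(x,y) (Q g)(y)`. Disintegrating `ρ_Z` into `ρ_X(x) dx` and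
`q(y|x) dy` turns its integral against `ρ_Z` into the marginal stationarity identity for `Q g`,
whose right-hand side `∫ (Q g) ρ_X` is again the integral of `g` against `ρ_Z`. -/

theorem lintegral_prod_withDensity_mul {α β : Type*} [MeasurableSpace α] [MeasurableSpace β]
    {μ : Measure α} {ν : Measure β} [SFinite ν] {ρ : α → ℝ≥0∞} {k : α → β → ℝ≥0∞}
    (hρ : Measurable ρ) (hk : Measurable (Function.uncurry k))
    {F : α × β → ℝ≥0∞} (hF : Measurable F) :
    ∫⁻ p, F p ∂((μ.prod ν).withDensity fun p => ρ p.1 * k p.1 p.2)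
      = ∫⁻ x, ∫⁻ y, F (x, y) * k x y ∂ν ∂(μ.withDensity ρ) := by
  have hk' : Measurable fun p : α × β => k p.1 p.2 := hk
  have hD : Measurable fun p : α × β => ρ p.1 * k p.1 p.2 := (hρ.comp measurable_fst).mul hk'
  have hFk : Measurable fun p : α × β => F p * k p.1 p.2 := hF.mul hk'
  rw [lintegral_withDensity_eq_lintegral_mul _ hD hF, lintegral_prod _ (hD.mul hF).aemeasurable,
    lintegral_withDensity_eq_lintegral_mul _ hρ hFk.lintegral_prod_right']
  refine lintegral_congr fun x => ?_
  have hFk_x : Measurable fun y => F (x, y) * k x y := hFk.comp measurable_prodMk_left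
  rw [Pi.mul_apply, ← lintegral_const_mul _ hFk_x]
  exact lintegral_congr fun y => by simp only [Pi.mul_apply]; ring

theorem augmented_chain_stationary_general
    {d : ℕ} (ρX : (Fin d → ℝ) → ℝ) (q : (Fin d → ℝ) → (Fin d → ℝ) → ℝ)
    (α : (Fin d → ℝ) → (Fin d → ℝ) → ℝ)
    (hρX_nonneg : ∀ x, 0 ≤ ρX x)
    (hρX_meas : Measurable ρX)
    (hq_meas : Measurable (Function.uncurry q))
    (hα_meas : Measurable (Function.uncurry α))
    -- stationarity of the marginal chain `(X_k)` with respect to the density `ρ_X`: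
    (hstat : ∀ f : (Fin d → ℝ) → ℝ≥0∞, Measurable f →
      ∫⁻ x, (∫⁻ y, (ENNReal.ofReal (1 - α x y) * f x + ENNReal.ofReal (α x y) * f y)
          * ENNReal.ofReal (q x y))
        ∂(volume.withDensity fun x => ENNReal.ofReal (ρX x))
      = ∫⁻ x, f x ∂(volume.withDensity fun x => ENNReal.ofReal (ρX x))) :
    -- stationarity of the augmented chain with respect to `ρ_Z(x,y) = ρ_X(x) q(y|x)`:
    ∀ g : ((Fin d → ℝ) × (Fin d → ℝ)) → ℝ≥0∞, Measurable g →
      ∫⁻ p, (ENNReal.ofReal (1 - α p.1 p.2)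
              * ∫⁻ y', g (p.1, y') * ENNReal.ofReal (q p.1 y')) +
            (ENNReal.ofReal (α p.1 p.2)
              * ∫⁻ y', g (p.2, y') * ENNReal.ofReal (q p.2 y'))
        ∂((volume.prod volume).withDensity fun p => ENNReal.ofReal (ρX p.1 * q p.1 p.2))
      = ∫⁻ p, g p
        ∂((volume.prod volume).withDensity fun p => ENNReal.ofReal (ρX p.1 * q p.1 p.2)) := by
  intro g hg
  have hk : Measurable (Function.uncurry fun x y => ENNReal.ofReal (q x y)) :=
    hq_meas.ennreal_ofReal
  set Qg : (Fin d → ℝ) → ℝ≥0∞ := fun x => ∫⁻ y', g (x, y') * ENNReal.ofReal (q x y')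
  have hQg : Measurable Qg := (hg.mul hk).lintegral_prod_right'
  have hα' : Measurable fun p : (Fin d → ℝ) × (Fin d → ℝ) => α p.1 p.2 := hα_meas
  have hKg : Measurable fun p : (Fin d → ℝ) × (Fin d → ℝ) =>
      ENNReal.ofReal (1 - α p.1 p.2) * Qg p.1 + ENNReal.ofReal (α p.1 p.2) * Qg p.2 :=
    ((measurable_const.sub hα').ennreal_ofReal.mul (hQg.comp measurable_fst)).add
      (hα'.ennreal_ofReal.mul (hQg.comp measurable_snd))
  have hρZ : (fun p : (Fin d → ℝ) × (Fin d → ℝ) => ENNReal.ofReal (ρX p.1 * q p.1 p.2))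
      = fun p => ENNReal.ofReal (ρX p.1) * ENNReal.ofReal (q p.1 p.2) :=
    funext fun p => ENNReal.ofReal_mul (hρX_nonneg p.1)
  rw [hρZ, lintegral_prod_withDensity_mul hρX_meas.ennreal_ofReal hk hKg,
    lintegral_prod_withDensity_mul hρX_meas.ennreal_ofReal hk hg]
  exact hstat Qg hQg

/-- If the Markov chain `(X_k)` of an acceptance-rejection algorithm has
stationary density `ρ_X` (stationarity of the marginal transition kernel expressed in
integral form against all nonnegative measurable functions), then the density
`ρ_Z(x,y) = ρ_X(x) q(y|x)` is stationary for the augmented chain `Z_k = (X_k, Y_k)`,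
whose transition kernel moves `(x,y)` to `(x, y')` with `y' ∼ q(·|x)` with probability
`1 - α(x,y)` and to `(y, y')` with `y' ∼ q(·|y)` with probability `α(x,y)`. -/
theorem augmented_chain_stationary
    {d : ℕ} (ρX : (Fin d → ℝ) → ℝ) (q : (Fin d → ℝ) → (Fin d → ℝ) → ℝ)
    (α : (Fin d → ℝ) → (Fin d → ℝ) → ℝ)
    (hρX_nonneg : ∀ x, 0 ≤ ρX x)
    (hq_nonneg : ∀ x y, 0 ≤ q x y)
    (hα : ∀ x y, α x y ∈ Set.Icc (0:ℝ) 1)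
    (hρX_meas : Measurable ρX)
    (hq_meas : Measurable (Function.uncurry q))
    (hα_meas : Measurable (Function.uncurry α))
    (hq_prob : ∀ x, ∫⁻ y, ENNReal.ofReal (q x y) = 1)
    (hρX_prob : ∫⁻ x, ENNReal.ofReal (ρX x) = 1)
    -- stationarity of the marginal chain `(X_k)` with respect to the density `ρ_X`:
    (hstat : ∀ f : (Fin d → ℝ) → ℝ≥0∞, Measurable f →
      ∫⁻ x, (∫⁻ y, (ENNReal.ofReal (1 - α x y) * f x + ENNReal.ofReal (α x y) * f y)
          * ENNReal.ofReal (q x y))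
        ∂(volume.withDensity fun x => ENNReal.ofReal (ρX x))
      = ∫⁻ x, f x ∂(volume.withDensity fun x => ENNReal.ofReal (ρX x))) :
    -- stationarity of the augmented chain with respect to `ρ_Z(x,y) = ρ_X(x) q(y|x)`:
    ∀ g : ((Fin d → ℝ) × (Fin d → ℝ)) → ℝ≥0∞, Measurable g →
      ∫⁻ p, (ENNReal.ofReal (1 - α p.1 p.2)
              * ∫⁻ y', g (p.1, y') * ENNReal.ofReal (q p.1 y')) +
            (ENNReal.ofReal (α p.1 p.2)
              * ∫⁻ y', g (p.2, y') * ENNReal.ofReal (q p.2 y'))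
        ∂((volume.prod volume).withDensity fun p => ENNReal.ofReal (ρX p.1 * q p.1 p.2))
      = ∫⁻ p, g p
        ∂((volume.prod volume).withDensity fun p => ENNReal.ofReal (ρX p.1 * q p.1 p.2)) :=
  augmented_chain_stationary_general ρX q α hρX_nonneg hρX_meas hq_meas hα_meas hstat
end

section
/- Suppose a Markov chain (X_k) with kernel K_X on ℝ^d is geometrically ergodic toward μ, i.e., there exists r > 1 such that Σ_{m≥1} r^m ‖K_X^m(x,·) − μ‖_TV < ∞ for all x. Then the augmented acceptance-rejection chain Z_k = (X_k, Y_k) is geometrically ergodic toward μ⊙q: for all (x,y), Σ_{m≥1} r^m ‖K_Z^m((x,y),·) − μ⊙q‖_TV < ∞. -/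
open MeasureTheory ENNReal

/-- The measure `μ ⊙ q` on `ℝ^d × ℝ^d` with `(μ ⊙ q)(A × B) = ∫_A ∫_B q(y|x) dy dμ(x)`. -/
noncomputable def odotMeasure {d : ℕ} (q : (Fin d → ℝ) → (Fin d → ℝ) → ℝ)
    (μ : Measure (Fin d → ℝ)) : Measure ((Fin d → ℝ) × (Fin d → ℝ)) :=
  (μ.prod volume).withDensity fun p => ENNReal.ofReal (q p.1 p.2)

/-- The proposal measure `q(·|x)` as a measure on `ℝ^d`. -/
noncomputable def propMeasure {d : ℕ} (q : (Fin d → ℝ) → (Fin d → ℝ) → ℝ)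
    (x : Fin d → ℝ) : Measure (Fin d → ℝ) :=
  volume.withDensity fun y => ENNReal.ofReal (q x y)

/-- Marginal transition kernel `K_X` of the acceptance-rejection chain: draw `y ∼ q(·|x)`,
move to `y` with probability `α(x,y)` and stay at `x` otherwise. -/
noncomputable def accRejKernel {d : ℕ} (q : (Fin d → ℝ) → (Fin d → ℝ) → ℝ)
    (α : (Fin d → ℝ) → (Fin d → ℝ) → ℝ) (x : Fin d → ℝ) : Measure (Fin d → ℝ) :=
  (propMeasure q x).bind fun y =>
    ENNReal.ofReal (1 - α x y) • Measure.dirac x + ENNReal.ofReal (α x y) • Measure.dirac y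

/-- Transition kernel `K_Z` of the augmented chain `Z_k = (X_k, Y_k)`:
`K_Z((x,y), A×B) = (1-α(x,y)) 1_A(x) q(B|x) + α(x,y) 1_A(y) q(B|y)`. -/
noncomputable def augKernel {d : ℕ} (q : (Fin d → ℝ) → (Fin d → ℝ) → ℝ)
    (α : (Fin d → ℝ) → (Fin d → ℝ) → ℝ) (p : (Fin d → ℝ) × (Fin d → ℝ)) :
    Measure ((Fin d → ℝ) × (Fin d → ℝ)) :=
  ENNReal.ofReal (1 - α p.1 p.2) • (Measure.dirac p.1).prod (propMeasure q p.1)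
    + ENNReal.ofReal (α p.1 p.2) • (Measure.dirac p.2).prod (propMeasure q p.2)

/-- `m`-step iterate `κ^m(x, ·)` of a transition kernel, with `κ^0(x,·) = δ_x`. -/
noncomputable def iterKernel {β : Type*} [MeasurableSpace β]
    (κ : β → Measure β) : ℕ → β → Measure β
  | 0, x => Measure.dirac x
  | (m + 1), x => (iterKernel κ m x).bind κ

/-- Total variation distance between two measures (as a supremum over measurable events). -/
noncomputable def tvDist {β : Type*} [MeasurableSpace β] (μ ν : Measure β) : ℝ :=
  ⨆ s : Set β, |(μ s).toReal - (ν s).toReal|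

/-!
Write `Λ u = δ_u ⊗ q(·|u)`, so that `ν ⊙ q = ν.bind Λ`, and `A(x, y) = (1 - α) δ_x + α δ_y`
for the acceptance step. Proposing and then accepting gives `K_X = Λ ; A`, while the augmented
chain accepts first: `K_Z = A ; Λ`. Hence `K_Z^(m+1)((x, y), ·) = (A(x, y) ; K_X^m) ; Λ`.
Binding with the Markov kernel `Λ` does not increase the total variation distance, and the
distance is convex in its first argument, so
`‖K_Z^(m+1)((x, y), ·) - μ ⊙ q‖ ≤ ‖K_X^m(x, ·) - μ‖ + ‖K_X^m(y, ·) - μ‖`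
and the geometric series for `Z` is dominated by the two for `X`.
-/

namespace MeasureTheory.Measure

variable {β γ : Type*} [MeasurableSpace β] [MeasurableSpace γ]

theorem add_bind (P Q : Measure β) {f : β → Measure γ} (hf : Measurable f) :
    (P + Q).bind f = P.bind f + Q.bind f := by
  ext s hs
  simp only [bind_apply hs hf.aemeasurable, coe_add, Pi.add_apply, lintegral_add_measure]

theorem map_bind_eq_bind_comp {ν : Measure β} {g : β → γ} (hg : Measurable g)
    {f : γ → Measure β} (hf : Measurable f) : (ν.map g).bind f = ν.bind (f ∘ g) := by
  ext s hs
  rw [bind_apply hs hf.aemeasurable, bind_apply hs (hf.comp hg).aemeasurable,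
    lintegral_map (f := fun c => f c s) ((measurable_coe hs).comp hf) hg]
  rfl

end MeasureTheory.Measure

section TotalVariation

variable {β γ : Type*} [MeasurableSpace β] [MeasurableSpace γ]

theorem tvDist_nonneg (P Q : Measure β) : 0 ≤ tvDist P Q :=
  Real.iSup_nonneg fun _ => abs_nonneg _

theorem tvDist_comm (P Q : Measure β) : tvDist P Q = tvDist Q P := by
  simp only [tvDist, abs_sub_comm]

theorem abs_sub_le_tvDist (P Q : Measure β) [IsFiniteMeasure P] [IsFiniteMeasure Q]
    (s : Set β) : |(P s).toReal - (Q s).toReal| ≤ tvDist P Q := by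
  refine le_ciSup (f := fun t => |(P t).toReal - (Q t).toReal|)
    ⟨(P Set.univ).toReal + (Q Set.univ).toReal, ?_⟩ s
  rintro _ ⟨t, rfl⟩
  have hP : (P t).toReal ≤ (P Set.univ).toReal := measureReal_mono (Set.subset_univ t)
  have hQ : (Q t).toReal ≤ (Q Set.univ).toReal := measureReal_mono (Set.subset_univ t)
  rw [abs_sub_le_iff]
  constructor <;> linarith [(P t).toReal_nonneg, (Q t).toReal_nonneg]

theorem measure_le_add_tvDist (P Q : Measure β) [IsFiniteMeasure P] [IsFiniteMeasure Q]
    (s : Set β) : P s ≤ Q s + ENNReal.ofReal (tvDist P Q) := by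
  have h := (le_abs_self _).trans (abs_sub_le_tvDist P Q s)
  rw [← ENNReal.ofReal_toReal (measure_ne_top P s),
    ← ENNReal.ofReal_toReal (measure_ne_top Q s),
    ← ENNReal.ofReal_add ENNReal.toReal_nonneg (tvDist_nonneg P Q)]
  exact ENNReal.ofReal_le_ofReal (by linarith)

theorem tvDist_le_of_forall_measurableSet (P Q : Measure β) [IsFiniteMeasure P]
    [IsFiniteMeasure Q] {c : ℝ} (hc : 0 ≤ c)
    (hPQ : ∀ s, MeasurableSet s → P s ≤ Q s + ENNReal.ofReal c)
    (hQP : ∀ s, MeasurableSet s → Q s ≤ P s + ENNReal.ofReal c) :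
    tvDist P Q ≤ c := by
  refine Real.iSup_le (fun s => ?_) hc
  -- a measurable hull of `s` for `P + Q` is a measurable hull for `P` and for `Q` at once
  set t := toMeasurable (P + Q) s
  have hfin : (P + Q) s ≠ ⊤ := measure_ne_top _ s
  have hPt : P t = P s := by
    simpa using Measure.measure_toMeasurable_add_inter_left MeasurableSet.univ hfin
  have hQt : Q t = Q s := by
    simpa using Measure.measure_toMeasurable_add_inter_right MeasurableSet.univ hfin
  have toReal_le {a b : ℝ≥0∞} (hb : b ≠ ⊤) (h : a ≤ b + ENNReal.ofReal c) :
      a.toReal ≤ b.toReal + c := by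
    simpa [ENNReal.toReal_add hb ENNReal.ofReal_ne_top, hc] using
      ENNReal.toReal_mono (by finiteness) h
  have hPQt := hPQ t (measurableSet_toMeasurable _ s)
  have hQPt := hQP t (measurableSet_toMeasurable _ s)
  rw [hPt, hQt] at hPQt hQPt
  rw [abs_sub_le_iff]
  constructor
  · linarith [toReal_le (measure_ne_top Q s) hPQt]
  · linarith [toReal_le (measure_ne_top P s) hQPt]

theorem lintegral_le_lintegral_add_tvDist (P Q : Measure β) [IsFiniteMeasure P]
    [IsFiniteMeasure Q] {g : β → ℝ≥0∞} (hg : Measurable g) (hg1 : ∀ b, g b ≤ 1) :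
    ∫⁻ b, g b ∂P ≤ ∫⁻ b, g b ∂Q + ENNReal.ofReal (tvDist P Q) := by
  set D := ENNReal.ofReal (tvDist P Q)
  set f : β → ℝ := fun b => (g b).toReal
  have hf1 (b : β) : f b ≤ 1 := by simpa using ENNReal.toReal_mono one_ne_top (hg1 b)
  have layercake : ∀ ν : Measure β, ∫⁻ b, g b ∂ν = ∫⁻ t in Set.Ioi 0, ν {b | t < f b} := by
    intro ν
    rw [← lintegral_eq_lintegral_meas_lt ν (ae_of_all _ fun _ => ENNReal.toReal_nonneg)
      hg.ennreal_toReal.aemeasurable]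
    exact lintegral_congr fun b =>
      (ENNReal.ofReal_toReal (ne_top_of_le_ne_top one_ne_top (hg1 b))).symm
  have hlevel (t : ℝ) :
      P {b | t < f b} ≤ Q {b | t < f b} + (Set.Iic 1).indicator (fun _ => D) t := by
    by_cases ht : t ≤ 1
    · simpa [ht] using measure_le_add_tvDist P Q {b | t < f b}
    · have hempty : {b | t < f b} = ∅ :=
        Set.eq_empty_of_forall_notMem fun b hb => ht (le_of_lt (lt_of_lt_of_le hb (hf1 b)))
      simp [hempty]
  rw [layercake P, layercake Q]
  calc ∫⁻ t in Set.Ioi 0, P {b | t < f b}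
      ≤ ∫⁻ t in Set.Ioi 0, (Q {b | t < f b} + (Set.Iic 1).indicator (fun _ => D) t) :=
        lintegral_mono hlevel
    _ = (∫⁻ t in Set.Ioi 0, Q {b | t < f b}) + D := by
        rw [lintegral_add_right _ (measurable_const.indicator measurableSet_Iic),
          lintegral_indicator measurableSet_Iic, setLIntegral_const,
          Measure.restrict_apply measurableSet_Iic, Set.Iic_inter_Ioi, Real.volume_Ioc]
        simp

theorem tvDist_bind_le (P Q : Measure β) [IsProbabilityMeasure P] [IsProbabilityMeasure Q]
    {κ : β → Measure γ} (hκ : Measurable κ) (hκ1 : ∀ b, IsProbabilityMeasure (κ b)) :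
    tvDist (P.bind κ) (Q.bind κ) ≤ tvDist P Q := by
  have : IsProbabilityMeasure (P.bind κ) :=
    isProbabilityMeasure_bind hκ.aemeasurable (ae_of_all _ hκ1)
  have : IsProbabilityMeasure (Q.bind κ) :=
    isProbabilityMeasure_bind hκ.aemeasurable (ae_of_all _ hκ1)
  have hbind (R R' : Measure β) [IsFiniteMeasure R] [IsFiniteMeasure R'] (s : Set γ)
      (hs : MeasurableSet s) : R.bind κ s ≤ R'.bind κ s + ENNReal.ofReal (tvDist R R') := by
    rw [Measure.bind_apply hs hκ.aemeasurable, Measure.bind_apply hs hκ.aemeasurable]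
    refine lintegral_le_lintegral_add_tvDist R R' ((Measure.measurable_coe hs).comp hκ) fun b => ?_
    have := hκ1 b
    exact prob_le_one
  refine tvDist_le_of_forall_measurableSet _ _ (tvDist_nonneg P Q) (hbind P Q) fun s hs => ?_
  simpa only [tvDist_comm Q P] using hbind Q P s hs

theorem tvDist_smul_add_smul_le (P Q μ : Measure β) [IsFiniteMeasure P] [IsFiniteMeasure Q]
    [IsFiniteMeasure μ] {t : ℝ} (ht : t ∈ Set.Icc (0 : ℝ) 1) :
    tvDist (ENNReal.ofReal (1 - t) • P + ENNReal.ofReal t • Q) μ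
      ≤ (1 - t) * tvDist P μ + t * tvDist Q μ := by
  obtain ⟨ht0, ht1⟩ := ht
  refine Real.iSup_le (fun s => ?_) (by
    have := tvDist_nonneg P μ; have := tvDist_nonneg Q μ; positivity)
  have hmix : ((ENNReal.ofReal (1 - t) • P + ENNReal.ofReal t • Q) s).toReal
      - (μ s).toReal = (1 - t) * ((P s).toReal - (μ s).toReal)
        + t * ((Q s).toReal - (μ s).toReal) := by
    simp only [Measure.coe_add, Measure.coe_smul, Pi.add_apply, Pi.smul_apply, smul_eq_mul]
    rw [ENNReal.toReal_add (by finiteness) (by finiteness), ENNReal.toReal_mul,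
      ENNReal.toReal_mul, ENNReal.toReal_ofReal (by linarith), ENNReal.toReal_ofReal ht0]
    ring
  rw [hmix]
  calc _ ≤ |(1 - t) * ((P s).toReal - (μ s).toReal)| + |t * ((Q s).toReal - (μ s).toReal)| :=
        abs_add_le _ _
    _ ≤ (1 - t) * tvDist P μ + t * tvDist Q μ := by
        rw [abs_mul, abs_mul, abs_of_nonneg (by linarith), abs_of_nonneg ht0]
        gcongr
        · exact abs_sub_le_tvDist P μ s
        · exact abs_sub_le_tvDist Q μ s

end TotalVariation

section Iterates

variable {β γ : Type*} [MeasurableSpace β] [MeasurableSpace γ]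

theorem measurable_iterKernel {κ : β → Measure β} (hκ : Measurable κ) (m : ℕ) :
    Measurable (iterKernel κ m) := by
  induction m with
  | zero => exact Measure.measurable_dirac
  | succ m ih => exact (Measure.measurable_bind' hκ).comp ih

theorem isProbabilityMeasure_iterKernel {κ : β → Measure β} (hκ : Measurable κ)
    (hκ1 : ∀ b, IsProbabilityMeasure (κ b)) (m : ℕ) (b : β) :
    IsProbabilityMeasure (iterKernel κ m b) := by
  induction m with
  | zero => exact Measure.dirac.isProbabilityMeasure
  | succ m ih => exact isProbabilityMeasure_bind hκ.aemeasurable (ae_of_all _ hκ1)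

theorem iterKernel_bind_bind_succ {a : γ → Measure β} {l : β → Measure γ}
    (ha : Measurable a) (hl : Measurable l) (m : ℕ) (p : γ) :
    iterKernel (fun p => (a p).bind l) (m + 1) p
      = ((a p).bind (iterKernel (fun b => (l b).bind a) m)).bind l := by
  set κ := fun b => (l b).bind a
  have hal : Measurable fun p => (a p).bind l := (Measure.measurable_bind' hl).comp ha
  have hκ : Measurable κ := (Measure.measurable_bind' ha).comp hl
  induction m with
  | zero =>
    change (Measure.dirac p).bind _ = ((a p).bind Measure.dirac).bind l
    rw [Measure.dirac_bind hal, Measure.bind_dirac]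
  | succ m ih =>
    have hswap (b : β) : (l b).bind (fun p => (a p).bind l) = ((l b).bind a).bind l :=
      (Measure.bind_bind ha.aemeasurable hl.aemeasurable).symm
    calc iterKernel (fun p => (a p).bind l) (m + 2) p
        = (((a p).bind (iterKernel κ m)).bind l).bind fun p => (a p).bind l := by
          rw [iterKernel, ih]
      _ = ((a p).bind (iterKernel κ m)).bind fun b => ((l b).bind a).bind l := by
          rw [Measure.bind_bind hl.aemeasurable hal.aemeasurable]
          simp only [hswap]
      _ = (((a p).bind (iterKernel κ m)).bind κ).bind l := by
          rw [Measure.bind_bind hκ.aemeasurable hl.aemeasurable]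
      _ = ((a p).bind (iterKernel κ (m + 1))).bind l := by
          rw [Measure.bind_bind (measurable_iterKernel hκ m).aemeasurable hκ.aemeasurable]
          rfl

end Iterates

section AcceptReject

variable {β γ : Type*} [MeasurableSpace β] [MeasurableSpace γ] {α : β → β → ℝ}

noncomputable def acceptStep (α : β → β → ℝ) (x y : β) : Measure β :=
  ENNReal.ofReal (1 - α x y) • Measure.dirac x + ENNReal.ofReal (α x y) • Measure.dirac y

theorem acceptStep_bind {f : β → Measure γ} (hf : Measurable f) (x y : β) :
    (acceptStep α x y).bind f
      = ENNReal.ofReal (1 - α x y) • f x + ENNReal.ofReal (α x y) • f y := by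
  rw [acceptStep, Measure.add_bind _ _ hf, Measure.bind_smul, Measure.bind_smul,
    Measure.dirac_bind hf, Measure.dirac_bind hf]

theorem isProbabilityMeasure_acceptStep (hα : ∀ x y, α x y ∈ Set.Icc (0 : ℝ) 1) (x y : β) :
    IsProbabilityMeasure (acceptStep α x y) := by
  constructor
  simp only [acceptStep, Measure.coe_add, Measure.coe_smul, Pi.add_apply, Pi.smul_apply,
    measure_univ, smul_eq_mul, mul_one]
  rw [← ENNReal.ofReal_add (by linarith [(hα x y).2]) (hα x y).1]
  norm_num

theorem measurable_acceptStep (hα : Measurable (Function.uncurry α)) :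
    Measurable fun p : β × β => acceptStep α p.1 p.2 := by
  refine Measure.measurable_of_measurable_coe _ fun s hs => ?_
  simp only [acceptStep, Measure.coe_add, Measure.coe_smul, Pi.add_apply, Pi.smul_apply,
    smul_eq_mul, Measure.dirac_apply' _ hs]
  have hα' : Measurable fun p : β × β => α p.1 p.2 := hα
  fun_prop (disch := exact hs)

end AcceptReject

section AugmentedChain

variable {d : ℕ} {q α : (Fin d → ℝ) → (Fin d → ℝ) → ℝ}

noncomputable def odotKernel (q : (Fin d → ℝ) → (Fin d → ℝ) → ℝ) (u : Fin d → ℝ) :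
    Measure ((Fin d → ℝ) × (Fin d → ℝ)) :=
  (Measure.dirac u).prod (propMeasure q u)

instance (q : (Fin d → ℝ) → (Fin d → ℝ) → ℝ) (x : Fin d → ℝ) : SFinite (propMeasure q x) := by
  rw [propMeasure]
  infer_instance

theorem isProbabilityMeasure_odotKernel (hq_prob : ∀ x, ∫⁻ y, ENNReal.ofReal (q x y) = 1)
    (u : Fin d → ℝ) : IsProbabilityMeasure (odotKernel q u) := by
  have : IsProbabilityMeasure (propMeasure q u) := by
    constructor
    rw [propMeasure, withDensity_apply _ MeasurableSet.univ, Measure.restrict_univ, hq_prob u]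
  rw [odotKernel]
  infer_instance

theorem odotKernel_eq_map (u : Fin d → ℝ) :
    odotKernel q u = (propMeasure q u).map (Prod.mk u) :=
  Measure.dirac_prod u

theorem odotKernel_apply (u : Fin d → ℝ) {s : Set ((Fin d → ℝ) × (Fin d → ℝ))}
    (hs : MeasurableSet s) :
    odotKernel q u s = ∫⁻ v, s.indicator (fun p => ENNReal.ofReal (q p.1 p.2)) (u, v) := by
  rw [odotKernel_eq_map, Measure.map_apply measurable_prodMk_left hs, propMeasure,
    withDensity_apply _ (measurable_prodMk_left hs),
    ← lintegral_indicator (measurable_prodMk_left hs)]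
  rfl

theorem measurable_odotKernel (hq_meas : Measurable (Function.uncurry q)) :
    Measurable (odotKernel q) :=
  Measure.measurable_of_measurable_coe _ fun s hs => by
    simp_rw [odotKernel_apply _ hs]
    exact (hq_meas.ennreal_ofReal.indicator hs).lintegral_prod_right'

theorem odotMeasure_eq_bind (hq_meas : Measurable (Function.uncurry q))
    (μ : Measure (Fin d → ℝ)) [SFinite μ] : odotMeasure q μ = μ.bind (odotKernel q) := by
  have hdensity : Measurable fun p : (Fin d → ℝ) × (Fin d → ℝ) => ENNReal.ofReal (q p.1 p.2) :=
    hq_meas.ennreal_ofReal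
  ext s hs
  rw [Measure.bind_apply hs (measurable_odotKernel hq_meas).aemeasurable, odotMeasure,
    withDensity_apply _ hs, ← lintegral_indicator hs,
    lintegral_prod _ (hdensity.indicator hs).aemeasurable]
  exact lintegral_congr fun u => (odotKernel_apply u hs).symm

theorem accRejKernel_eq_bind (hα_meas : Measurable (Function.uncurry α)) :
    accRejKernel q α = fun x => (odotKernel q x).bind fun p => acceptStep α p.1 p.2 := by
  funext x
  rw [odotKernel_eq_map, Measure.map_bind_eq_bind_comp measurable_prodMk_left
    (measurable_acceptStep hα_meas)]
  rfl

theorem measurable_accRejKernel (hq_meas : Measurable (Function.uncurry q))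
    (hα_meas : Measurable (Function.uncurry α)) : Measurable (accRejKernel q α) := by
  rw [accRejKernel_eq_bind hα_meas]
  exact (Measure.measurable_bind' (measurable_acceptStep hα_meas)).comp
    (measurable_odotKernel hq_meas)

theorem isProbabilityMeasure_accRejKernel (hq_prob : ∀ x, ∫⁻ y, ENNReal.ofReal (q x y) = 1)
    (hα : ∀ x y, α x y ∈ Set.Icc (0 : ℝ) 1) (hα_meas : Measurable (Function.uncurry α))
    (x : Fin d → ℝ) : IsProbabilityMeasure (accRejKernel q α x) := by
  rw [accRejKernel_eq_bind hα_meas]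
  have := isProbabilityMeasure_odotKernel hq_prob x
  exact isProbabilityMeasure_bind (measurable_acceptStep hα_meas).aemeasurable
    (ae_of_all _ fun p => isProbabilityMeasure_acceptStep hα p.1 p.2)

theorem augKernel_eq_bind (hq_meas : Measurable (Function.uncurry q)) :
    augKernel q α = fun p => (acceptStep α p.1 p.2).bind (odotKernel q) := by
  funext p
  rw [acceptStep_bind (measurable_odotKernel hq_meas)]
  rfl

theorem iterKernel_augKernel_succ (hq_meas : Measurable (Function.uncurry q))
    (hα_meas : Measurable (Function.uncurry α)) (m : ℕ) (x y : Fin d → ℝ) :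
    iterKernel (augKernel q α) (m + 1) (x, y)
      = ((acceptStep α x y).bind (iterKernel (accRejKernel q α) m)).bind (odotKernel q) := by
  rw [augKernel_eq_bind hq_meas, accRejKernel_eq_bind hα_meas,
    iterKernel_bind_bind_succ (measurable_acceptStep hα_meas) (measurable_odotKernel hq_meas)]

theorem tvDist_iterKernel_augKernel_le (hq_meas : Measurable (Function.uncurry q))
    (hq_prob : ∀ x, ∫⁻ y, ENNReal.ofReal (q x y) = 1) (hα : ∀ x y, α x y ∈ Set.Icc (0 : ℝ) 1)
    (hα_meas : Measurable (Function.uncurry α)) (μ : Measure (Fin d → ℝ))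
    [IsProbabilityMeasure μ] (m : ℕ) (x y : Fin d → ℝ) :
    tvDist (iterKernel (augKernel q α) (m + 1) (x, y)) (odotMeasure q μ)
      ≤ tvDist (iterKernel (accRejKernel q α) m x) μ
        + tvDist (iterKernel (accRejKernel q α) m y) μ := by
  set K := accRejKernel q α
  have hK := measurable_accRejKernel hq_meas hα_meas
  have hK1 := isProbabilityMeasure_accRejKernel hq_prob hα hα_meas
  have := isProbabilityMeasure_acceptStep hα x y
  have := isProbabilityMeasure_iterKernel hK hK1 m x
  have := isProbabilityMeasure_iterKernel hK hK1 m y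
  have : IsProbabilityMeasure ((acceptStep α x y).bind (iterKernel K m)) :=
    isProbabilityMeasure_bind (measurable_iterKernel hK m).aemeasurable
      (ae_of_all _ (isProbabilityMeasure_iterKernel hK hK1 m))
  rw [iterKernel_augKernel_succ hq_meas hα_meas, odotMeasure_eq_bind hq_meas]
  calc _ ≤ tvDist ((acceptStep α x y).bind (iterKernel K m)) μ :=
        tvDist_bind_le _ _ (measurable_odotKernel hq_meas)
          (isProbabilityMeasure_odotKernel hq_prob)
    _ ≤ (1 - α x y) * tvDist (iterKernel K m x) μ + α x y * tvDist (iterKernel K m y) μ := by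
        rw [acceptStep_bind (measurable_iterKernel hK m)]
        exact tvDist_smul_add_smul_le _ _ _ (hα x y)
    _ ≤ tvDist (iterKernel K m x) μ + tvDist (iterKernel K m y) μ := by
        have := tvDist_nonneg (iterKernel K m x) μ
        have := tvDist_nonneg (iterKernel K m y) μ
        nlinarith [(hα x y).1, (hα x y).2]

end AugmentedChain

theorem augmented_chain_geometrically_ergodic_general
    {d : ℕ} (q : (Fin d → ℝ) → (Fin d → ℝ) → ℝ)
    (α : (Fin d → ℝ) → (Fin d → ℝ) → ℝ)
    (hq_meas : Measurable (Function.uncurry q))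
    (hq_prob : ∀ x, ∫⁻ y, ENNReal.ofReal (q x y) = 1)
    (hα : ∀ x y, α x y ∈ Set.Icc (0:ℝ) 1)
    (hα_meas : Measurable (Function.uncurry α))
    (μ : Measure (Fin d → ℝ)) [IsProbabilityMeasure μ]
    (r : ℝ)
    (hgeo : ∀ x : Fin d → ℝ,
      Summable fun m : ℕ => r ^ (m + 1) * tvDist (iterKernel (accRejKernel q α) (m + 1) x) μ) :
    ∀ x y : Fin d → ℝ,
      Summable fun m : ℕ =>
        r ^ (m + 1) * tvDist (iterKernel (augKernel q α) (m + 1) (x, y)) (odotMeasure q μ) := by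
  intro x y
  have hshift (z : Fin d → ℝ) :
      Summable fun m => r ^ (m + 1) * tvDist (iterKernel (accRejKernel q α) m z) μ := by
    rw [← summable_nat_add_iff 1]
    exact ((hgeo z).mul_left r).congr fun m => by ring
  refine Summable.of_norm_bounded ((hshift x).abs.add (hshift y).abs) fun m => ?_
  rw [Real.norm_eq_abs, abs_mul, abs_of_nonneg (tvDist_nonneg _ _), abs_mul, abs_mul,
    abs_of_nonneg (tvDist_nonneg _ _), abs_of_nonneg (tvDist_nonneg _ _), ← mul_add]
  exact mul_le_mul_of_nonneg_left
    (tvDist_iterKernel_augKernel_le hq_meas hq_prob hα hα_meas μ m x y) (abs_nonneg _)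

/-- If the marginal acceptance-rejection chain `(X_k)` is geometrically
ergodic toward `μ`, i.e. `∑_{m≥1} r^m ‖K_X^m(x,·) − μ‖_TV < ∞` for all `x` (for some
`r > 1`), then the augmented chain `Z_k = (X_k,Y_k)` is geometrically ergodic toward
`μ ⊙ q`: for all `(x,y)`, `∑_{m≥1} r^m ‖K_Z^m((x,y),·) − μ ⊙ q‖_TV < ∞`. -/
theorem augmented_chain_geometrically_ergodic
    {d : ℕ} (q : (Fin d → ℝ) → (Fin d → ℝ) → ℝ)
    (α : (Fin d → ℝ) → (Fin d → ℝ) → ℝ)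
    (hq_nonneg : ∀ x y, 0 ≤ q x y)
    (hq_meas : Measurable (Function.uncurry q))
    (hq_prob : ∀ x, ∫⁻ y, ENNReal.ofReal (q x y) = 1)
    (hα : ∀ x y, α x y ∈ Set.Icc (0:ℝ) 1)
    (hα_meas : Measurable (Function.uncurry α))
    (μ : Measure (Fin d → ℝ)) [IsProbabilityMeasure μ]
    (r : ℝ) (hr : 1 < r)
    (hgeo : ∀ x : Fin d → ℝ,
      Summable fun m : ℕ => r ^ (m + 1) * tvDist (iterKernel (accRejKernel q α) (m + 1) x) μ) :
    ∀ x y : Fin d → ℝ,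
      Summable fun m : ℕ =>
        r ^ (m + 1) * tvDist (iterKernel (augKernel q α) (m + 1) (x, y)) (odotMeasure q μ) :=
  augmented_chain_geometrically_ergodic_general q α hq_meas hq_prob hα hα_meas μ r hgeo
end
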